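/- (BMC with E-transform.) Assume (N₁, m₁) ▷_E (N₂, m₂) and that F₂ is the E-transform of F₁. Then F₁ is reachable in (N₁, m₁) if and only if there exists j ≥ 0 such that F₂(ȳ_j) ∧ φ_j(N₂, m₂) is satisfiable, where φ_j(N₂, m₂) is the j-step BMC unrolling of N₂. -/

import Mathlib

/-- A labeled Petri net over a global type `V` of variables/places and labels in
`L` (`none` is the silent label `τ`).  The net only uses the places in `places`:
the flow functions vanish outside of it. -/
structure LNet (V L : Type) where
  T : Type
  places : Set V
  Pre : T → V → ℕ
  Post : T → V → ℕ
  pre_supp : ∀ t p, p ∉ places → Pre t p = 0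
  post_supp : ∀ t p, p ∉ places → Post t p = 0
  label : T → Option L

namespace LNet

variable {V L : Type}

/-- Transition `t` is enabled at marking `m`. -/
def Enabled (N : LNet V L) (m : V → ℕ) (t : N.T) : Prop :=
  ∀ p, N.Pre t p ≤ m p

/-- `m →t m'` : `t` is enabled at `m` and `m' = m - Pre(t) + Post(t)` (pointwise). -/
def Fire (N : LNet V L) (m : V → ℕ) (t : N.T) (m' : V → ℕ) : Prop :=
  N.Enabled m t ∧ ∀ p, m' p = m p - N.Pre t p + N.Post t p

/-- `m ⇒ρ m'` : the firing sequence `ρ` fires from `m` to `m'`. -/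
def FireSeq (N : LNet V L) : (V → ℕ) → List N.T → (V → ℕ) → Prop
  | m, [], m' => m' = m
  | m, t :: ρ, m'' => ∃ m', N.Fire m t m' ∧ N.FireSeq m' ρ m''

/-- Reachability from `m₀`. -/
def Reach (N : LNet V L) (m₀ m : V → ℕ) : Prop :=
  ∃ ρ, N.FireSeq m₀ ρ m

/-- The observation sequence of a firing sequence (silent transitions erased). -/
def Obs (N : LNet V L) (ρ : List N.T) : List L :=
  ρ.filterMap N.label

end LNet

/-- `m₁ ⊎ m₂ ⊨ E` : the two markings are compatible and, jointly, satisfy the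
constraint system `E` (i.e. `E ∧ m̲₁ ∧ m̲₂` is satisfiable: some valuation of all
the variables agrees with `m₁` on `P₁`, with `m₂` on `P₂` and satisfies `E`). -/
def JSat {V L : Type} (N₁ N₂ : LNet V L) (E : (V → ℕ) → Prop)
    (m₁ m₂ : V → ℕ) : Prop :=
  ∃ v : V → ℕ, (∀ p ∈ N₁.places, v p = m₁ p) ∧ (∀ p ∈ N₂.places, v p = m₂ p) ∧ E v

/-- `(N₁, m₁) ⊒_E (N₂, m₂)` : `(N₂, m₂)` is an `E`-abstraction of `(N₁, m₁)`,
conditions (A1) and (A2). -/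
def EAbs {V L : Type} (N₁ : LNet V L) (m₁ : V → ℕ) (N₂ : LNet V L) (m₂ : V → ℕ)
    (E : (V → ℕ) → Prop) : Prop :=
  -- (A1) the initial markings jointly satisfy `E`
  JSat N₁ N₂ E m₁ m₂ ∧
  -- (A2)
  ∀ ρ₁ m₁', N₁.FireSeq m₁ ρ₁ m₁' →
    (∃ m₂' : V → ℕ, JSat N₁ N₂ E m₁' m₂') ∧
    ∀ m₂' : V → ℕ, JSat N₁ N₂ E m₁' m₂' →
      ∃ ρ₂ m₂'', N₂.FireSeq m₂ ρ₂ m₂'' ∧ (∀ p ∈ N₂.places, m₂'' p = m₂' p) ∧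
        N₁.Obs ρ₁ = N₂.Obs ρ₂

/-- `(N₁, m₁) ▷_E (N₂, m₂)` : `E`-abstraction equivalence (abstraction in both
directions). -/
def EEquiv {V L : Type} (N₁ : LNet V L) (m₁ : V → ℕ) (N₂ : LNet V L) (m₂ : V → ℕ)
    (E : (V → ℕ) → Prop) : Prop :=
  EAbs N₁ m₁ N₂ m₂ E ∧ EAbs N₂ m₂ N₁ m₁ E

/-- `F` is a formula whose (free) variables all belong to `S`: its truth value
only depends on the values of the variables in `S`. -/
def FormulaDependsOn {V : Type} (F : (V → ℕ) → Prop) (S : Set V) : Prop :=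
  ∀ v w : V → ℕ, (∀ x ∈ S, v x = w x) → (F v ↔ F w)

/-- The `E`-transform `F₂(ȳ) ≜ ∃x̄. Ẽ(x̄, ȳ) ∧ F₁(x̄)` of a formula `F₁` with
variables in `P₁`. -/
def ETransform {V L : Type} (N₁ N₂ : LNet V L) (E : (V → ℕ) → Prop)
    (F₁ : (V → ℕ) → Prop) : (V → ℕ) → Prop :=
  fun m₂ => ∃ m₁ : V → ℕ, JSat N₁ N₂ E m₁ m₂ ∧ F₁ m₁

/-- Semantic counterpart of the transition formula `T(x̄,x̄')`: fire at most one
transition (stuttering allowed), with the marking update stated over ℤ. -/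
def LNet.TStep {V L : Type} (N : LNet V L) (m m' : V → ℕ) : Prop :=
  (∀ p, m' p = m p) ∨
    ∃ t, N.Enabled m t ∧ ∀ p, (m' p : ℤ) = (m p : ℤ) + (N.Post t p : ℤ) - (N.Pre t p : ℤ)

/-- Satisfiability over ℕ of the `j`-step BMC unrolling `F(x̄_j) ∧ φ_j(N, m₀)`,
with `φ₀ ≜ m̲₀(x̄₀)` and `φ_{i+1} ≜ φ_i ∧ T(x̄_i, x̄_{i+1})`. -/
def BMCSat {V L : Type} (N : LNet V L) (m₀ : V → ℕ) (F : (V → ℕ) → Prop)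
    (j : ℕ) : Prop :=
  ∃ ms : ℕ → V → ℕ, ms 0 = m₀ ∧ (∀ i < j, N.TStep (ms i) (ms (i + 1))) ∧ F (ms j)


/-!
BMC is sound and complete for reachability: a satisfying assignment of the `j`-step unrolling
is a firing sequence of length at most `j` padded with stutter steps, and conversely. So the
right-hand side says that some marking satisfying the `E`-transform `F₂` is reachable in `N₂`,
and reachability is conserved by `E`-equivalence: an abstraction in either direction transports
a reachable marking to a reachable marking related to it by `E`, which satisfies `F₂`, resp.
(as `F₁` only reads the places of `N₁`) `F₁`.
-/

namespace LNet

variable {V L : Type} (N : LNet V L)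

theorem tStep_iff {m m' : V → ℕ} : N.TStep m m' ↔ m' = m ∨ ∃ t, N.Fire m t m' := by
  refine or_congr funext_iff.symm (exists_congr fun t => and_congr_right fun hen => ?_)
  refine forall_congr' fun p => ?_
  -- enabledness makes the truncated subtraction in `Fire` agree with the update over ℤ
  have := hen p
  omega

variable {N}

theorem FireSeq.append_fire {m m' m'' : V → ℕ} {ρ : List N.T} {t : N.T}
    (hρ : N.FireSeq m ρ m') (ht : N.Fire m' t m'') : N.FireSeq m (ρ ++ [t]) m'' := by
  induction ρ generalizing m with
  | nil => exact ⟨m'', hρ ▸ ht, rfl⟩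
  | cons s ρ ih =>
    obtain ⟨n, hs, hρ⟩ := hρ
    exact ⟨n, hs, ih hρ⟩

theorem FireSeq.exists_tStep_chain {m m' : V → ℕ} {ρ : List N.T} (hρ : N.FireSeq m ρ m') :
    ∃ ms : ℕ → V → ℕ, ms 0 = m ∧ ms ρ.length = m' ∧
      ∀ i < ρ.length, N.TStep (ms i) (ms (i + 1)) := by
  induction ρ generalizing m with
  | nil => exact ⟨fun _ => m, rfl, hρ.symm, by simp⟩
  | cons t ρ ih =>
    obtain ⟨n, ht, hρ⟩ := hρ
    obtain ⟨ms, h0, hlast, hsteps⟩ := ih hρ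
    refine ⟨fun | 0 => m | k + 1 => ms k, rfl, hlast, ?_⟩
    rintro (_ | i) hi
    · subst h0
      exact N.tStep_iff.2 (Or.inr ⟨t, ht⟩)
    · exact hsteps i (Nat.succ_lt_succ_iff.1 hi)

theorem reach_of_tStep_chain {ms : ℕ → V → ℕ} {j : ℕ}
    (hsteps : ∀ i < j, N.TStep (ms i) (ms (i + 1))) : N.Reach (ms 0) (ms j) := by
  induction j with
  | zero => exact ⟨[], rfl⟩
  | succ j ih =>
    obtain ⟨ρ, hρ⟩ := ih fun i hi => hsteps i (by omega)
    rcases N.tStep_iff.1 (hsteps j j.lt_succ_self) with hstutter | ⟨t, ht⟩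
    · exact ⟨ρ, hstutter ▸ hρ⟩
    · exact ⟨ρ ++ [t], hρ.append_fire ht⟩

variable (N)

theorem exists_reach_and_iff_exists_bmcSat (m₀ : V → ℕ) (F : (V → ℕ) → Prop) :
    (∃ m, N.Reach m₀ m ∧ F m) ↔ ∃ j, BMCSat N m₀ F j := by
  constructor
  · rintro ⟨m, ⟨ρ, hρ⟩, hF⟩
    obtain ⟨ms, h0, hlast, hsteps⟩ := hρ.exists_tStep_chain
    exact ⟨ρ.length, ms, h0, hsteps, hlast ▸ hF⟩
  · rintro ⟨j, ms, rfl, hsteps, hF⟩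
    exact ⟨ms j, reach_of_tStep_chain hsteps, hF⟩

end LNet

section EAbstraction

variable {V L : Type} {N₁ N₂ : LNet V L} {E : (V → ℕ) → Prop}

theorem JSat.symm {m₁ m₂ : V → ℕ} (h : JSat N₁ N₂ E m₁ m₂) : JSat N₂ N₁ E m₂ m₁ :=
  let ⟨v, h₁, h₂, hE⟩ := h
  ⟨v, h₂, h₁, hE⟩

theorem JSat.congr_right {m₁ m₂ m₂' : V → ℕ} (h : JSat N₁ N₂ E m₁ m₂)
    (hagree : ∀ p ∈ N₂.places, m₂' p = m₂ p) : JSat N₁ N₂ E m₁ m₂' :=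
  let ⟨v, h₁, h₂, hE⟩ := h
  ⟨v, h₁, fun p hp => (h₂ p hp).trans (hagree p hp).symm, hE⟩

variable {m₁ m₂ : V → ℕ}

theorem EAbs.exists_jSat_of_reach (h : EAbs N₁ m₁ N₂ m₂ E) {m₁' : V → ℕ}
    (hreach : N₁.Reach m₁ m₁') : ∃ m₂', JSat N₁ N₂ E m₁' m₂' :=
  let ⟨ρ, hρ⟩ := hreach
  (h.2 ρ m₁' hρ).1

theorem EAbs.exists_reach_agree_of_jSat (h : EAbs N₁ m₁ N₂ m₂ E) {m₁' m₂' : V → ℕ}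
    (hreach : N₁.Reach m₁ m₁') (hsat : JSat N₁ N₂ E m₁' m₂') :
    ∃ m₂'', N₂.Reach m₂ m₂'' ∧ ∀ p ∈ N₂.places, m₂'' p = m₂' p := by
  obtain ⟨ρ, hρ⟩ := hreach
  obtain ⟨ρ₂, m₂'', hρ₂, hagree, -⟩ := (h.2 ρ m₁' hρ).2 m₂' hsat
  exact ⟨m₂'', ⟨ρ₂, hρ₂⟩, hagree⟩

theorem EEquiv.exists_reach_iff_eTransform (h : EEquiv N₁ m₁ N₂ m₂ E)
    {F₁ : (V → ℕ) → Prop} (hvars : FormulaDependsOn F₁ N₁.places) :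
    (∃ m₁', N₁.Reach m₁ m₁' ∧ F₁ m₁') ↔
      ∃ m₂', N₂.Reach m₂ m₂' ∧ ETransform N₁ N₂ E F₁ m₂' := by
  constructor
  · rintro ⟨m₁', hreach, hF⟩
    obtain ⟨m₂', hsat⟩ := h.1.exists_jSat_of_reach hreach
    obtain ⟨m₂'', hreach₂, hagree⟩ := h.1.exists_reach_agree_of_jSat hreach hsat
    exact ⟨m₂'', hreach₂, m₁', hsat.congr_right hagree, hF⟩
  · rintro ⟨m₂', hreach, m₁', hsat, hF⟩
    obtain ⟨m₁'', hreach₁, hagree⟩ := h.2.exists_reach_agree_of_jSat hreach hsat.symm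
    exact ⟨m₁'', hreach₁, (hvars _ _ hagree).2 hF⟩

end EAbstraction

/-- (BMC with `E`-transform.)  Assume `(N₁, m₁) ▷_E (N₂, m₂)` and let `F₂` be
the `E`-transform of `F₁`.  Then `F₁` is reachable in `(N₁, m₁)` iff there is
some `j ≥ 0` such that the BMC formula `F₂(ȳ_j) ∧ φ_j(N₂, m₂)` is satisfiable. -/
theorem bmc_with_Etransform {V L : Type} (N₁ N₂ : LNet V L) (m₁ m₂ : V → ℕ)
    (E : (V → ℕ) → Prop) (F₁ : (V → ℕ) → Prop)
    (hvars : FormulaDependsOn F₁ N₁.places)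
    (h : EEquiv N₁ m₁ N₂ m₂ E) :
    (∃ m', N₁.Reach m₁ m' ∧ F₁ m') ↔
      ∃ j : ℕ, BMCSat N₂ m₂ (ETransform N₁ N₂ E F₁) j :=
  (h.exists_reach_iff_eTransform hvars).trans (N₂.exists_reach_and_iff_exists_bmcSat m₂ _)
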